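/- Let H be a real inner product space and L : H → H a linear map that is symmetric (⟨Lw, v⟩ = ⟨w, Lv⟩ for all w, v) and nonpositive (⟨Lw, w⟩ ≤ 0 for all w). Let τ_1, …, τ_N > 0 be time steps satisfying condition S1, and let u^0, …, u^N and f^1, …, f^N in H satisfy the BDF2 scheme D_2 u^n = L u^n + f^n for 1 ≤ n ≤ N. Then for every 1 ≤ n ≤ N, ‖u^n‖ ≤ ‖u^0‖ + 2·Σ_{k=1}^n Σ_{j=1}^k θ^{(k)}_{k−j} ‖f^j‖ ≤ ‖u^0‖ + 2·t_n·max_{1≤j≤n} ‖f^j‖. In particular, if all f^j = 0 then ‖u^n‖ ≤ ‖u^0‖ (monotonicity preservation). -/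

import Mathlib

open Finset

/-- BDF2 convolution kernels `b^{(n)}_j` built from the step sizes `τ`. -/
noncomputable def bdf2 (τ : ℕ → ℝ) (n j : ℕ) : ℝ :=
  if n = 1 then (if j = 0 then 1 / τ 1 else 0)
  else if j = 0 then (1 + 2 * (τ n / τ (n - 1))) / (τ n * (1 + τ n / τ (n - 1)))
  else if j = 1 then -(τ n / τ (n - 1)) ^ 2 / (τ n * (1 + τ n / τ (n - 1)))
  else 0

/-- DOC kernels: `doc τ n g = θ^{(n)}_g`, defined by the recursive procedure
`θ^{(n)}_0 = 1/b^{(n)}_0`, `θ^{(n)}_{n-k} = -(1/b^{(k)}_0) ∑_{j=k+1}^n θ^{(n)}_{n-j} b^{(j)}_{j-k}`. -/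
noncomputable def doc (τ : ℕ → ℝ) (n : ℕ) : ℕ → ℝ
  | 0 => 1 / bdf2 τ n 0
  | (g + 1) =>
    -(1 / bdf2 τ (n - (g + 1)) 0) *
      ∑ i ∈ (Finset.range (g + 1)).attach,
        doc τ n i.1 * bdf2 τ (n - i.1) (g + 1 - i.1)
  decreasing_by exact Finset.mem_range.mp i.2

/-- The variable-step BDF2 formula `D_2 v^n = ∑_{k=1}^n b^{(n)}_{n-k} (v^k - v^{k-1})`. -/
noncomputable def D2 {V : Type*} [AddCommGroup V] [Module ℝ V]
    (τ : ℕ → ℝ) (v : ℕ → V) (n : ℕ) : V :=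
  ∑ k ∈ Finset.Icc 1 n, bdf2 τ n (n - k) • (v k - v (k - 1))

/-- Time levels `t_n = τ_1 + ⋯ + τ_n`. -/
noncomputable def tlv (τ : ℕ → ℝ) (n : ℕ) : ℝ := ∑ i ∈ Finset.Icc 1 n, τ i

lemma bdf2_of_two_le (τ : ℕ → ℝ) (m j : ℕ) (hj : 2 ≤ j) : bdf2 τ m j = 0 := by
  unfold bdf2
  split_ifs with h1 h2 h3 h4 <;> first | rfl | omega

lemma doc_succ (τ : ℕ → ℝ) (n g : ℕ) :
    doc τ n (g+1) = -(bdf2 τ (n - g) 1) / bdf2 τ (n - (g+1)) 0 * doc τ n g := by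
  rw [doc]
  rw [Finset.sum_attach (range (g+1)) (fun i => doc τ n i * bdf2 τ (n - i) (g + 1 - i))]
  rw [Finset.sum_eq_single g]
  · have : g + 1 - g = 1 := by omega
    rw [this]; ring
  · intro b hb hbne
    have hb' : b < g + 1 := Finset.mem_range.mp hb
    rw [bdf2_of_two_le τ (n - b) (g + 1 - b) (by omega)]
    ring
  · intro h; exact absurd (Finset.self_mem_range_succ g) h

section
variable {N : ℕ} {τ : ℕ → ℝ}

lemma bdf2_zero_pos (hτ : ∀ k, 1 ≤ k → k ≤ N → 0 < τ k) {k : ℕ}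
    (h1 : 1 ≤ k) (h2 : k ≤ N) : 0 < bdf2 τ k 0 := by
  have hk : 0 < τ k := hτ k h1 h2
  unfold bdf2
  rcases eq_or_ne k 1 with rfl | hne
  · simp only [if_true, if_pos rfl]
    exact one_div_pos.mpr hk
  · have hk2 : 2 ≤ k := by omega
    have h0 : 0 < τ (k-1) := hτ (k-1) (by omega) (by omega)
    have hr : 0 < τ k / τ (k-1) := div_pos hk h0
    simp only [if_neg hne, if_pos rfl]
    exact div_pos (by linarith) (mul_pos hk (by linarith))

lemma bdf2_one_neg (hτ : ∀ k, 1 ≤ k → k ≤ N → 0 < τ k) {k : ℕ}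
    (h1 : 2 ≤ k) (h2 : k ≤ N) : bdf2 τ k 1 < 0 := by
  have hk : 0 < τ k := hτ k (by omega) h2
  have h0 : 0 < τ (k-1) := hτ (k-1) (by omega) (by omega)
  have hr : 0 < τ k / τ (k-1) := div_pos hk h0
  have hne : k ≠ 1 := by omega
  unfold bdf2
  simp only [if_neg hne, if_neg one_ne_zero, if_pos rfl]
  apply div_neg_of_neg_of_pos
  · have : 0 < (τ k / τ (k-1))^2 := by positivity
    linarith
  · exact mul_pos hk (by linarith)

lemma bdf2_one_eq_zero (τ : ℕ → ℝ) : bdf2 τ 1 1 = 0 := by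
  unfold bdf2; simp

lemma doc_prod (τ : ℕ → ℝ) (n g : ℕ) :
    doc τ n g =
      (∏ i ∈ range g, (-(bdf2 τ (n-i) 1) / bdf2 τ (n-i-1) 0)) * (1 / bdf2 τ n 0) := by
  induction g with
  | zero => simp [doc]
  | succ g ih =>
    rw [doc_succ, ih, Finset.prod_range_succ]
    have : n - (g+1) = n - g - 1 := by omega
    rw [this]; ring

lemma doc_pos (hτ : ∀ k, 1 ≤ k → k ≤ N → 0 < τ k) {n : ℕ} (hn : n ≤ N) :
    ∀ g k, k + g = n → 1 ≤ k → 0 < doc τ n g := by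
  intro g
  induction g with
  | zero =>
    intro k hk h1
    have : doc τ n 0 = 1 / bdf2 τ n 0 := by rw [doc]
    rw [this]
    have := bdf2_zero_pos hτ (show 1 ≤ n by omega) hn
    exact one_div_pos.mpr this
  | succ g ih =>
    intro k hk h1
    rw [doc_succ]
    have hkg : n - g = k + 1 := by omega
    have hkg1 : n - (g+1) = k := by omega
    rw [hkg, hkg1]
    have hb1 : bdf2 τ (k+1) 1 < 0 := bdf2_one_neg hτ (by omega) (by omega)
    have hb0 : 0 < bdf2 τ k 0 := bdf2_zero_pos hτ h1 (by omega)
    have hd : 0 < doc τ n g := ih (k+1) (by omega) (by omega)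
    have : 0 < -bdf2 τ (k+1) 1 / bdf2 τ k 0 := div_pos (by linarith) hb0
    exact mul_pos this hd

set_option maxHeartbeats 1000000 in
lemma doc_shift (τ : ℕ → ℝ) {n : ℕ} (g : ℕ)
    (h0 : bdf2 τ n 0 ≠ 0) (h1 : bdf2 τ (n-1) 0 ≠ 0) :
    bdf2 τ n 0 * doc τ n (g+1) = -(bdf2 τ n 1) * doc τ (n-1) g := by
  rw [doc_prod τ n (g+1), doc_prod τ (n-1) g]
  rw [Finset.prod_range_succ']
  have hre : ∀ i ∈ range g,
      (-(bdf2 τ (n-(i+1)) 1) / bdf2 τ (n-(i+1)-1) 0)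
        = (-(bdf2 τ (n-1-i) 1) / bdf2 τ (n-1-i-1) 0) := by
    intro i _
    rw [show n-(i+1) = n-1-i from by omega]
  rw [Finset.prod_congr rfl hre]
  have : n - 0 = n := rfl
  rw [this]
  field_simp

end

lemma D2_two_term {V : Type*} [AddCommGroup V] [Module ℝ V] (τ : ℕ → ℝ) (v : ℕ → V)
    {k : ℕ} (hk : 1 ≤ k) :
    D2 τ v k = bdf2 τ k 0 • (v k - v (k-1)) + bdf2 τ k 1 • (v (k-1) - v (k-1-1)) := by
  rcases eq_or_ne k 1 with rfl | hne
  · rw [bdf2_one_eq_zero]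
    unfold D2
    simp
  · have hk2 : 2 ≤ k := by omega
    unfold D2
    have hsub : (insert (k-1) {k} : Finset ℕ) ⊆ Finset.Icc 1 k := by
      intro x hx
      simp only [Finset.mem_insert, Finset.mem_singleton] at hx
      rcases hx with rfl | rfl <;> simp [Finset.mem_Icc] <;> omega
    rw [← Finset.sum_subset hsub]
    · rw [Finset.sum_insert (by simp; omega), Finset.sum_singleton]
      rw [show k - (k-1) = 1 from by omega, show k - k = 0 from by omega]
      exact add_comm _ _
    · intro x hx hnx
      simp only [Finset.mem_insert, Finset.mem_singleton, not_or] at hnx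
      simp only [Finset.mem_Icc] at hx
      rw [bdf2_of_two_le τ k (k - x) (by omega), zero_smul]

lemma doc_inv {V : Type*} [AddCommGroup V] [Module ℝ V]
    (hτ : ∀ k, 1 ≤ k → k ≤ N → 0 < τ k) (v : ℕ → V) {n : ℕ} (h1 : 1 ≤ n) (h2 : n ≤ N) :
    ∑ k ∈ Finset.Icc 1 n, doc τ n (n-k) • D2 τ v k = v n - v (n-1) := by
  obtain ⟨m, rfl⟩ : ∃ m, n = m + 1 := ⟨n - 1, by omega⟩
  have hsum : ∀ k ∈ Finset.Icc 1 (m+1), doc τ (m+1) (m+1-k) • D2 τ v k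
      = (doc τ (m+1) (m+1-k) * bdf2 τ k 0) • (v k - v (k-1))
        + (doc τ (m+1) (m+1-k) * bdf2 τ k 1) • (v (k-1) - v (k-1-1)) := by
    intro k hk
    rw [D2_two_term τ v (Finset.mem_Icc.mp hk).1, smul_add, smul_smul, smul_smul]
  rw [Finset.sum_congr rfl hsum, Finset.sum_add_distrib]
  -- handle second sum : drop k = 1 term, reindex to Icc 1 m
  have hmem1 : (1:ℕ) ∈ Finset.Icc 1 (m+1) := by simp
  have hmap : Finset.Ioc 1 (m+1) = (Finset.Icc 1 m).map (addRightEmbedding 1) := by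
    rw [Finset.map_add_right_Icc]
    exact (Finset.Icc_add_one_left_eq_Ioc 1 (m+1)).symm
  have hS2 : ∑ k ∈ Finset.Icc 1 (m+1),
        (doc τ (m+1) (m+1-k) * bdf2 τ k 1) • (v (k-1) - v (k-1-1))
      = ∑ j ∈ Finset.Icc 1 m,
        (doc τ (m+1) (m+1-(j+1)) * bdf2 τ (j+1) 1) • (v (j+1-1) - v (j+1-1-1)) := by
    rw [← Finset.add_sum_erase _ _ hmem1, bdf2_one_eq_zero, mul_zero, zero_smul, zero_add,
      Finset.Icc_erase_left, hmap, Finset.sum_map]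
    simp only [addRightEmbedding_apply]
  rw [hS2]
  -- split top term of first sum
  rw [Finset.sum_Icc_succ_top (by omega : 1 ≤ m+1)]
  rw [add_right_comm, ← Finset.sum_add_distrib]
  have hzero : ∀ j ∈ Finset.Icc 1 m,
      (doc τ (m+1) (m+1-j) * bdf2 τ j 0) • (v j - v (j-1))
        + (doc τ (m+1) (m+1-(j+1)) * bdf2 τ (j+1) 1) • (v (j+1-1) - v (j+1-1-1))
      = 0 := by
    intro j hj
    obtain ⟨hj1, hj2⟩ := Finset.mem_Icc.mp hj
    have hd : doc τ (m+1) (m+1-j)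
        = -(bdf2 τ (j+1) 1) / bdf2 τ j 0 * doc τ (m+1) (m-j) := by
      have := doc_succ τ (m+1) (m-j)
      rw [show m+1 - (m-j) = j+1 from by omega, show m+1 - (m-j+1) = j from by omega,
        show m - j + 1 = m+1-j from by omega] at this
      exact this
    have hb0 : bdf2 τ j 0 ≠ 0 := (bdf2_zero_pos hτ hj1 (by omega)).ne'
    have hc : -bdf2 τ (j+1) 1 / bdf2 τ j 0 * doc τ (m+1) (m-j) * bdf2 τ j 0
        + doc τ (m+1) (m-j) * bdf2 τ (j+1) 1 = 0 := by
      field_simp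
      ring
    rw [show j+1-1 = j from rfl, show m+1-(j+1) = m-j from by omega, hd, ← add_smul, hc,
      zero_smul]
  rw [Finset.sum_congr rfl hzero, Finset.sum_const_zero, zero_add]
  rw [show m+1-(m+1) = 0 from by omega]
  have hb0 : bdf2 τ (m+1) 0 ≠ 0 := (bdf2_zero_pos hτ (by omega) h2).ne'
  have hdoc0 : doc τ (m+1) 0 = 1 / bdf2 τ (m+1) 0 := by rw [doc]
  rw [hdoc0, one_div, inv_mul_cancel₀ hb0, one_smul]

lemma tlv_diff (τ : ℕ → ℝ) {n : ℕ} (h1 : 1 ≤ n) : tlv τ n - tlv τ (n-1) = τ n := by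
  obtain ⟨m, rfl⟩ : ∃ m, n = m + 1 := ⟨n - 1, by omega⟩
  unfold tlv
  rw [Finset.sum_Icc_succ_top (by omega : 1 ≤ m+1)]
  simp

lemma D2_tlv (hτ : ∀ k, 1 ≤ k → k ≤ N → 0 < τ k) {k : ℕ}
    (h1 : 1 ≤ k) (h2 : k ≤ N) : D2 τ (tlv τ) k = 1 := by
  rw [D2_two_term τ (tlv τ) h1, tlv_diff τ h1]
  rcases eq_or_ne k 1 with rfl | hne
  · rw [bdf2_one_eq_zero]
    have h0 : τ 1 ≠ 0 := (hτ 1 le_rfl h2).ne'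
    unfold bdf2
    simp [h0]
  · have hk2 : 2 ≤ k := by omega
    rw [tlv_diff τ (by omega : 1 ≤ k - 1)]
    have ht : τ k ≠ 0 := (hτ k h1 h2).ne'
    have ht1 : (0:ℝ) < τ (k-1) := hτ (k-1) (by omega) (by omega)
    have hr : 0 < τ k / τ (k-1) := div_pos (hτ k h1 h2) ht1
    unfold bdf2
    simp only [if_neg hne, if_pos (rfl : (0:ℕ) = 0), if_neg one_ne_zero, if_neg zero_ne_one,
      if_pos (rfl : (1:ℕ) = 1)]
    simp only [↓reduceIte]
    rw [smul_eq_mul, smul_eq_mul]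
    have hab : (0:ℝ) < τ (k-1) + τ k := by
      have := hτ k h1 h2; linarith
    rw [show 1 + τ k / τ (k-1) = (τ (k-1) + τ k) / τ (k-1) by field_simp]
    field_simp
    ring

lemma doc_row_sum (hτ : ∀ k, 1 ≤ k → k ≤ N → 0 < τ k) {n : ℕ}
    (h1 : 1 ≤ n) (h2 : n ≤ N) :
    ∑ k ∈ Finset.Icc 1 n, doc τ n (n-k) = τ n := by
  have h := doc_inv (V := ℝ) hτ (tlv τ) h1 h2
  rw [tlv_diff τ h1] at h
  rw [← h]
  apply Finset.sum_congr rfl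
  intro k hk
  obtain ⟨hk1, hk2⟩ := Finset.mem_Icc.mp hk
  rw [D2_tlv hτ hk1 (le_trans hk2 h2), smul_eq_mul, mul_one]

lemma key_poly (r s : ℝ) (hr : 0 < r) (hs : 0 < s)
    (hr2 : r ≤ (3 + Real.sqrt 17)/2) (hs2 : s ≤ (3 + Real.sqrt 17)/2) :
    s * (1+r) ≤ (2 + 4*r - r^2) * (1+s) := by
  set a := Real.sqrt 17 with ha
  have ha2 : a^2 = 17 := Real.sq_sqrt (by norm_num)
  have ha4 : 4 ≤ a := by
    nlinarith [Real.sqrt_nonneg 17, ha2]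
  have ha5 : a ≤ 5 := by nlinarith [Real.sqrt_nonneg 17, ha2]
  rcases le_or_gt 0 (1 + 3*r - r^2) with hpos | hneg
  · nlinarith [mul_nonneg hs.le hpos, mul_nonneg hr.le (by nlinarith : (0:ℝ) ≤ 4 - r)]
  · have hG : 0 ≤ ((3+a)/2 - r) * ((5+a)*r + a - 1) :=
      mul_nonneg (by linarith) (by nlinarith)
    have h3 : ((3+a)/2 - s) * (1 + 3*r - r^2) ≤ 0 :=
      mul_nonpos_of_nonneg_of_nonpos (by linarith) hneg.le
    nlinarith [hG, h3]

lemma key2 (r s b c : ℝ) (hb : 0 < b) (hc : 0 < c) (hr : 0 < r) (hs : 0 < s)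
    (hcs : c = s * b)
    (hr2 : r ≤ (3 + Real.sqrt 17)/2) (hs2 : s ≤ (3 + Real.sqrt 17)/2) :
    0 ≤ (1 + 2*r)/(b*(1+r)) + (-r^2/(b*(1+r)))/2 + (-s^2/(c*(1+s)))/2 := by
  have key := key_poly r s hr hs hr2 hs2
  have h1r : (0:ℝ) < 1 + r := by linarith
  have h1s : (0:ℝ) < 1 + s := by linarith
  subst hcs
  have heq : (1 + 2*r)/(b*(1+r)) + (-r^2/(b*(1+r)))/2 + (-s^2/((s*b)*(1+s)))/2
      = ((2+4*r-r^2)*(1+s) - s*(1+r)) / (2*b*(1+r)*(1+s)) := by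
    field_simp
    ring
  rw [heq]
  exact div_nonneg (by linarith) (by positivity)

lemma coef_nonneg (hτ : ∀ k, 1 ≤ k → k ≤ N → 0 < τ k)
    (hS1 : ∀ k, 2 ≤ k → k ≤ N →
      0 < τ k / τ (k - 1) ∧ τ k / τ (k - 1) ≤ (3 + Real.sqrt 17) / 2)
    {m : ℕ} (h1 : 1 ≤ m) (h2 : m ≤ N) :
    0 ≤ bdf2 τ m 0 + (if 2 ≤ m then bdf2 τ m 1 / 2 else 0) := by
  rcases eq_or_ne m 1 with rfl | hne
  · have h0 : 0 < τ 1 := hτ 1 le_rfl h2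
    rw [if_neg (by omega)]
    unfold bdf2
    simp only [reduceIte, add_zero]
    positivity
  · have hm2 : 2 ≤ m := by omega
    have hb : 0 < τ m := hτ m h1 h2
    have ha : 0 < τ (m-1) := hτ (m-1) (by omega) (by omega)
    obtain ⟨hr, hr2⟩ := hS1 m hm2 h2
    have ha5 : Real.sqrt 17 ≤ 5 := by
      nlinarith [Real.sqrt_nonneg 17, Real.sq_sqrt (show (0:ℝ) ≤ 17 by norm_num)]
    rw [if_pos hm2]
    unfold bdf2
    simp only [if_neg hne, reduceIte, if_neg (one_ne_zero : (1:ℕ) ≠ 0)]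
    set r := τ m / τ (m-1) with hrdef
    have h1r : (0:ℝ) < 1 + r := by linarith
    have heq : (1 + 2*r)/(τ m *(1+r)) + (-r^2/(τ m *(1+r)))/2
        = (2 + 4*r - r^2) / (2 * τ m * (1+r)) := by
      field_simp
      ring
    rw [heq]
    apply div_nonneg _ (by positivity)
    nlinarith [hr.le, hr2]

lemma coef_step (hτ : ∀ k, 1 ≤ k → k ≤ N → 0 < τ k)
    (hS1 : ∀ k, 2 ≤ k → k ≤ N →
      0 < τ k / τ (k - 1) ∧ τ k / τ (k - 1) ≤ (3 + Real.sqrt 17) / 2)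
    {m : ℕ} (h1 : 2 ≤ m) (h2 : m ≤ N) :
    0 ≤ (bdf2 τ (m-1) 0 + (if 2 ≤ m-1 then bdf2 τ (m-1) 1 / 2 else 0))
        + bdf2 τ m 1 / 2 := by
  have hb : 0 < τ m := hτ m (by omega) h2
  have ha : 0 < τ (m-1) := hτ (m-1) (by omega) (by omega)
  obtain ⟨hs, hs2⟩ := hS1 m h1 h2
  rcases eq_or_ne m 2 with rfl | hne2
  · have ha1 : 0 < τ 1 := by simpa using ha
    norm_num
    unfold bdf2
    norm_num
    have heq : (τ 1)⁻¹ + -(τ 2/τ 1)^2/(τ 2 *(1+ τ 2/τ 1))/2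
        = (2*(τ 1 + τ 2) - τ 2) / (2 * τ 1 * (τ 1 + τ 2)) := by
      have h1' : τ 1 ≠ 0 := ha1.ne'
      have h2' : τ 2 ≠ 0 := hb.ne'
      have h12 : τ 1 + τ 2 ≠ 0 := by positivity
      field_simp
      ring
    rw [heq]
    apply div_nonneg (by linarith) (by positivity)
  · have hm3 : 3 ≤ m := by omega
    have hc0 : 0 < τ (m-1-1) := hτ (m-1-1) (by omega) (by omega)
    obtain ⟨hr, hr2⟩ := hS1 (m-1) (by omega) (by omega)
    rw [if_pos (show 2 ≤ m-1 by omega)]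
    have hkey := key2 (τ (m-1)/τ (m-1-1)) (τ m/τ (m-1)) (τ (m-1)) (τ m)
      ha hb hr hs (by field_simp) hr2 hs2
    unfold bdf2
    simp only [if_neg (show m ≠ 1 by omega), if_neg (show m-1 ≠ 1 by omega), reduceIte,
      if_neg (one_ne_zero : (1:ℕ) ≠ 0)]
    convert hkey using 3 <;> ring

lemma psd_core (hτ : ∀ k, 1 ≤ k → k ≤ N → 0 < τ k)
    (hS1 : ∀ k, 2 ≤ k → k ≤ N →
      0 < τ k / τ (k - 1) ∧ τ k / τ (k - 1) ≤ (3 + Real.sqrt 17) / 2)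
    (p e : ℕ → ℝ) (hp : ∀ n, 0 ≤ p n)
    (he : ∀ n, 1 ≤ n → n ≤ N →
      bdf2 τ n 0 * p n + bdf2 τ n 1 * ((p n + p (n-1))/2) ≤ e n) :
    ∀ m, 1 ≤ m → m ≤ N →
      (bdf2 τ m 0 + (if 2 ≤ m then bdf2 τ m 1 / 2 else 0)) * p m
        ≤ ∑ n ∈ Finset.Icc 1 m, e n := by
  intro m
  induction m with
  | zero => omega
  | succ m ih =>
    intro _ h2
    rcases Nat.eq_zero_or_pos m with rfl | hm1
    · rw [Finset.Icc_self, Finset.sum_singleton, if_neg (by omega)]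
      have := he 1 le_rfl h2
      rw [bdf2_one_eq_zero] at this
      linarith [this]
    · have ihm := ih hm1 (by omega)
      rw [Finset.sum_Icc_succ_top (by omega : 1 ≤ m+1)]
      have hem := he (m+1) (by omega) h2
      rw [show m+1-1 = m from rfl] at hem
      have hstep := coef_step hτ hS1 (show 2 ≤ m+1 by omega) h2
      rw [show m+1-1 = m from rfl] at hstep
      have hmul : 0 ≤ ((bdf2 τ m 0 + (if 2 ≤ m then bdf2 τ m 1 / 2 else 0))
          + bdf2 τ (m+1) 1 / 2) * p m := mul_nonneg hstep (hp m)
      rw [if_pos (show 2 ≤ m+1 by omega)]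
      nlinarith [hmul, ihm, hem]

open RealInnerProductSpace in
lemma master_energy {H : Type*} [NormedAddCommGroup H] [InnerProductSpace ℝ H]
    (L : H →ₗ[ℝ] H)
    (hsym : ∀ w v : H, (inner ℝ (L w) v : ℝ) = inner ℝ w (L v))
    (hneg : ∀ w : H, (inner ℝ (L w) w : ℝ) ≤ 0)
    {N : ℕ} {τ : ℕ → ℝ}
    (hτ : ∀ k, 1 ≤ k → k ≤ N → 0 < τ k)
    (hS1 : ∀ k, 2 ≤ k → k ≤ N →
      0 < τ k / τ (k - 1) ∧ τ k / τ (k - 1) ≤ (3 + Real.sqrt 17) / 2)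
    (u f : ℕ → H)
    (hscheme : ∀ n, 1 ≤ n → n ≤ N → D2 τ u n = L (u n) + f n) :
    ∀ m, 1 ≤ m → m ≤ N →
      ‖u m‖^2 ≤ ‖u 0‖^2
        + 2 * ∑ n ∈ Finset.Icc 1 m,
            (∑ k ∈ Finset.Icc 1 n, doc τ n (n-k) * ‖f k‖) * ‖u n‖ := by
  intro m hm1 hm2
  set W : ℕ → H := fun n => ∑ k ∈ Finset.Icc 1 n, doc τ n (n-k) • u k with hW
  -- Cauchy-Schwarz for the PSD form -⟪L ·, ·⟫
  have hCS : ∀ x y : H, -⟪L x, y⟫ ≤ ((-⟪L x, x⟫) + (-⟪L y, y⟫))/2 := by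
    intro x y
    have h := hneg (x - y)
    rw [map_sub, inner_sub_left, inner_sub_right, inner_sub_right] at h
    have hyx : ⟪L y, x⟫ = ⟪L x, y⟫ := by
      rw [hsym y x, real_inner_comm]
    linarith
  -- reconstruction identity
  have hWid : ∀ n, 1 ≤ n → n ≤ N →
      bdf2 τ n 0 • W n + bdf2 τ n 1 • W (n-1) = u n := by
    intro n h1 h2
    obtain ⟨q, rfl⟩ : ∃ q, n = q + 1 := ⟨n - 1, by omega⟩
    have hb0 : bdf2 τ (q+1) 0 ≠ 0 := (bdf2_zero_pos hτ (by omega) h2).ne'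
    rw [hW]
    simp only
    rw [Finset.smul_sum, Finset.smul_sum]
    rw [Finset.sum_Icc_succ_top (by omega : 1 ≤ q+1)]
    rw [show q+1-(q+1) = 0 from by omega, show q+1-1 = q from rfl]
    have htop : bdf2 τ (q+1) 0 • doc τ (q+1) 0 • u (q+1) = u (q+1) := by
      rw [smul_smul, show doc τ (q+1) 0 = 1 / bdf2 τ (q+1) 0 from by rw [doc],
        mul_one_div, div_self hb0, one_smul]
    rw [htop]
    have hcancel : ∑ k ∈ Finset.Icc 1 q, bdf2 τ (q+1) 0 • doc τ (q+1) (q+1-k) • u k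
        + ∑ k ∈ Finset.Icc 1 q, bdf2 τ (q+1) 1 • doc τ q (q-k) • u k = 0 := by
      rw [← Finset.sum_add_distrib]
      apply Finset.sum_eq_zero
      intro k hk
      obtain ⟨hk1, hk2⟩ := Finset.mem_Icc.mp hk
      have hb0' : bdf2 τ q 0 ≠ 0 := (bdf2_zero_pos hτ (by omega) (by omega)).ne'
      have hshift := doc_shift τ (q - k) hb0 (by rw [show q+1-1 = q from rfl]; exact hb0')
      rw [show q+1-1 = q from rfl] at hshift
      rw [smul_smul, smul_smul, show q+1-k = (q-k)+1 from by omega, hshift, ← add_smul]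
      have : -bdf2 τ (q+1) 1 * doc τ q (q-k) + bdf2 τ (q+1) 1 * doc τ q (q-k) = 0 := by ring
      rw [this, zero_smul]
    rw [add_right_comm, hcancel, zero_add]
  -- the DOC expansion of the difference
  have hgrad : ∀ n, 1 ≤ n → n ≤ N →
      u n - u (n-1) = ∑ k ∈ Finset.Icc 1 n, doc τ n (n-k) • (L (u k) + f k) := by
    intro n h1 h2
    rw [← doc_inv hτ u h1 h2]
    apply Finset.sum_congr rfl
    intro k hk
    obtain ⟨hk1, hk2⟩ := Finset.mem_Icc.mp hk
    rw [hscheme k hk1 (le_trans hk2 h2)]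
  -- inner product expansion
  have hinner : ∀ n, 1 ≤ n → n ≤ N →
      ⟪u n - u (n-1), u n⟫ = ⟪L (W n), u n⟫
        + ∑ k ∈ Finset.Icc 1 n, doc τ n (n-k) * ⟪f k, u n⟫ := by
    intro n h1 h2
    rw [hgrad n h1 h2]
    rw [sum_inner]
    have hLW : L (W n) = ∑ k ∈ Finset.Icc 1 n, doc τ n (n-k) • L (u k) := by
      rw [hW]; simp only [map_sum, map_smul]
    rw [hLW, sum_inner, ← Finset.sum_add_distrib]
    apply Finset.sum_congr rfl
    intro k hk
    rw [real_inner_smul_left, real_inner_smul_left, inner_add_left]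
    ring
  -- the PSD bound : ∑ ⟪L (W n), u n⟫ ≤ 0
  have hpsd : ∑ n ∈ Finset.Icc 1 m, ⟪L (W n), u n⟫ ≤ 0 := by
    have hp : ∀ n, 0 ≤ -⟪L (W n), W n⟫ := fun n => by linarith [hneg (W n)]
    have he : ∀ n, 1 ≤ n → n ≤ N →
        bdf2 τ n 0 * (-⟪L (W n), W n⟫)
          + bdf2 τ n 1 * (((-⟪L (W n), W n⟫) + (-⟪L (W (n-1)), W (n-1)⟫))/2)
        ≤ -⟪L (W n), u n⟫ := by
      intro n h1 h2
      have hb1 : bdf2 τ n 1 ≤ 0 := by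
        rcases eq_or_ne n 1 with rfl | hne
        · rw [bdf2_one_eq_zero]
        · exact (bdf2_one_neg hτ (by omega) h2).le
      have hid := hWid n h1 h2
      have hexp : ⟪L (W n), u n⟫
          = bdf2 τ n 0 * ⟪L (W n), W n⟫ + bdf2 τ n 1 * ⟪L (W n), W (n-1)⟫ := by
        rw [← hid, inner_add_right, real_inner_smul_right, real_inner_smul_right]
      rw [hexp]
      have hcs := hCS (W n) (W (n-1))
      nlinarith [mul_le_mul_of_nonpos_left hcs hb1]
    have hcore := psd_core hτ hS1 (fun n => -⟪L (W n), W n⟫)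
      (fun n => -⟪L (W n), u n⟫) hp he m hm1 hm2
    have hcoef := coef_nonneg hτ hS1 hm1 hm2
    have h0 : (0:ℝ) ≤ ∑ n ∈ Finset.Icc 1 m, -⟪L (W n), u n⟫ := by
      refine le_trans ?_ hcore
      exact mul_nonneg hcoef (hp m)
    rw [show (∑ n ∈ Finset.Icc 1 m, -⟪L (W n), u n⟫)
        = -∑ n ∈ Finset.Icc 1 m, ⟪L (W n), u n⟫ from by
      rw [← Finset.sum_neg_distrib]] at h0
    linarith
  -- telescoping bound on the left
  have htel : ∀ M : ℕ, ∑ n ∈ Finset.Icc 1 M, (‖u n‖^2 - ‖u (n-1)‖^2) = ‖u M‖^2 - ‖u 0‖^2 := by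
    intro M
    induction M with
    | zero => simp
    | succ M ih => rw [Finset.sum_Icc_succ_top (by omega : 1 ≤ M+1), ih]; simp
  have hstep : ∀ n, 1 ≤ n → n ≤ N →
      (‖u n‖^2 - ‖u (n-1)‖^2)/2 ≤ ⟪u n - u (n-1), u n⟫ := by
    intro n h1 h2
    rw [inner_sub_left, real_inner_self_eq_norm_sq]
    have h := real_inner_le_norm (u (n-1)) (u n)
    nlinarith [sq_nonneg (‖u n‖ - ‖u (n-1)‖)]
  -- f-term bound
  have hfterm : ∀ n, 1 ≤ n → n ≤ N →
      ∑ k ∈ Finset.Icc 1 n, doc τ n (n-k) * ⟪f k, u n⟫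
        ≤ (∑ k ∈ Finset.Icc 1 n, doc τ n (n-k) * ‖f k‖) * ‖u n‖ := by
    intro n h1 h2
    rw [Finset.sum_mul]
    apply Finset.sum_le_sum
    intro k hk
    obtain ⟨hk1, hk2⟩ := Finset.mem_Icc.mp hk
    have hθ : 0 ≤ doc τ n (n-k) := (doc_pos hτ h2 (n-k) k (by omega) hk1).le
    have := real_inner_le_norm (f k) (u n)
    rw [mul_assoc]
    exact mul_le_mul_of_nonneg_left this hθ
  -- put it together
  have hsum : (‖u m‖^2 - ‖u 0‖^2)/2
      ≤ ∑ n ∈ Finset.Icc 1 m, (∑ k ∈ Finset.Icc 1 n, doc τ n (n-k) * ‖f k‖) * ‖u n‖ := by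
    calc (‖u m‖^2 - ‖u 0‖^2)/2
        = ∑ n ∈ Finset.Icc 1 m, (‖u n‖^2 - ‖u (n-1)‖^2)/2 := by
          rw [← Finset.sum_div, htel m]
      _ ≤ ∑ n ∈ Finset.Icc 1 m, ⟪u n - u (n-1), u n⟫ := by
          apply Finset.sum_le_sum
          intro n hn
          obtain ⟨hn1, hn2⟩ := Finset.mem_Icc.mp hn
          exact hstep n hn1 (le_trans hn2 hm2)
      _ = ∑ n ∈ Finset.Icc 1 m, (⟪L (W n), u n⟫
            + ∑ k ∈ Finset.Icc 1 n, doc τ n (n-k) * ⟪f k, u n⟫) := by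
          apply Finset.sum_congr rfl
          intro n hn
          obtain ⟨hn1, hn2⟩ := Finset.mem_Icc.mp hn
          exact hinner n hn1 (le_trans hn2 hm2)
      _ = (∑ n ∈ Finset.Icc 1 m, ⟪L (W n), u n⟫)
            + ∑ n ∈ Finset.Icc 1 m, ∑ k ∈ Finset.Icc 1 n, doc τ n (n-k) * ⟪f k, u n⟫ := by
          rw [Finset.sum_add_distrib]
      _ ≤ 0 + ∑ n ∈ Finset.Icc 1 m, (∑ k ∈ Finset.Icc 1 n, doc τ n (n-k) * ‖f k‖) * ‖u n‖ := by
          apply add_le_add hpsd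
          apply Finset.sum_le_sum
          intro n hn
          obtain ⟨hn1, hn2⟩ := Finset.mem_Icc.mp hn
          exact hfterm n hn1 (le_trans hn2 hm2)
      _ = ∑ n ∈ Finset.Icc 1 m, (∑ k ∈ Finset.Icc 1 n, doc τ n (n-k) * ‖f k‖) * ‖u n‖ := by
          rw [zero_add]
  linarith


/-- unconditional `L²` norm stability and monotonicity preservation. -/
theorem bdf2_L2_stability
    {H : Type*} [NormedAddCommGroup H] [InnerProductSpace ℝ H]
    (L : H →ₗ[ℝ] H)
    (hsym : ∀ w v : H, (inner ℝ (L w) v : ℝ) = inner ℝ w (L v))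
    (hneg : ∀ w : H, (inner ℝ (L w) w : ℝ) ≤ 0)
    (N : ℕ) (τ : ℕ → ℝ)
    (hτ : ∀ k, 1 ≤ k → k ≤ N → 0 < τ k)
    (hS1 : ∀ k, 2 ≤ k → k ≤ N →
      0 < τ k / τ (k - 1) ∧ τ k / τ (k - 1) ≤ (3 + Real.sqrt 17) / 2)
    (u f : ℕ → H)
    (hscheme : ∀ n, 1 ≤ n → n ≤ N → D2 τ u n = L (u n) + f n) :
    ∀ n (hn : 1 ≤ n), n ≤ N →
      (‖u n‖ ≤ ‖u 0‖ +
          2 * ∑ k ∈ Finset.Icc 1 n, ∑ j ∈ Finset.Icc 1 k, doc τ k (k - j) * ‖f j‖) ∧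
      (‖u 0‖ + 2 * ∑ k ∈ Finset.Icc 1 n, ∑ j ∈ Finset.Icc 1 k, doc τ k (k - j) * ‖f j‖
          ≤ ‖u 0‖ + 2 * tlv τ n *
              (Finset.Icc 1 n).sup' (Finset.nonempty_Icc.mpr hn) (fun j => ‖f j‖)) ∧
      ((∀ j, 1 ≤ j → j ≤ N → f j = 0) → ‖u n‖ ≤ ‖u 0‖) := by
  intro n hn hnN
  have hGnn : ∀ k, 1 ≤ k → k ≤ N →
      0 ≤ ∑ j ∈ Finset.Icc 1 k, doc τ k (k - j) * ‖f j‖ := by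
    intro k h1 h2
    apply Finset.sum_nonneg
    intro j hj
    obtain ⟨hj1, hj2⟩ := Finset.mem_Icc.mp hj
    exact mul_nonneg (doc_pos hτ h2 (k-j) j (by omega) hj1).le (norm_nonneg _)
  have hGsum_nn : 0 ≤ ∑ k ∈ Finset.Icc 1 n, ∑ j ∈ Finset.Icc 1 k, doc τ k (k - j) * ‖f j‖ := by
    apply Finset.sum_nonneg
    intro k hk
    obtain ⟨hk1, hk2⟩ := Finset.mem_Icc.mp hk
    exact hGnn k hk1 (le_trans hk2 hnN)
  have hmain : ‖u n‖ ≤ ‖u 0‖ +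
      2 * ∑ k ∈ Finset.Icc 1 n, ∑ j ∈ Finset.Icc 1 k, doc τ k (k - j) * ‖f j‖ := by
    obtain ⟨i, hi, hmax⟩ :=
      Finset.exists_max_image (Finset.Icc 0 n) (fun j => ‖u j‖) ⟨0, by simp⟩
    obtain ⟨hi0, hin⟩ := Finset.mem_Icc.mp hi
    have hun_le : ‖u n‖ ≤ ‖u i‖ := hmax n (by simp)
    rcases Nat.eq_zero_or_pos i with rfl | hi1
    · refine le_trans hun_le ?_
      linarith
    · have hu0_le : ‖u 0‖ ≤ ‖u i‖ := hmax 0 (by simp)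
      have hm := master_energy L hsym hneg hτ hS1 u f hscheme i hi1 (le_trans hin hnN)
      have hsum_le : ∑ q ∈ Finset.Icc 1 i,
            (∑ j ∈ Finset.Icc 1 q, doc τ q (q - j) * ‖f j‖) * ‖u q‖
          ≤ (∑ q ∈ Finset.Icc 1 n, ∑ j ∈ Finset.Icc 1 q, doc τ q (q - j) * ‖f j‖) * ‖u i‖ := by
        calc ∑ q ∈ Finset.Icc 1 i, (∑ j ∈ Finset.Icc 1 q, doc τ q (q - j) * ‖f j‖) * ‖u q‖
            ≤ ∑ q ∈ Finset.Icc 1 i, (∑ j ∈ Finset.Icc 1 q, doc τ q (q - j) * ‖f j‖) * ‖u i‖ := by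
              apply Finset.sum_le_sum
              intro q hq
              obtain ⟨hq1, hq2⟩ := Finset.mem_Icc.mp hq
              exact mul_le_mul_of_nonneg_left
                (hmax q (Finset.mem_Icc.mpr ⟨by omega, by omega⟩))
                (hGnn q hq1 (by omega))
          _ ≤ _ := by
              rw [← Finset.sum_mul]
              apply mul_le_mul_of_nonneg_right _ (norm_nonneg _)
              apply Finset.sum_le_sum_of_subset_of_nonneg
                (Finset.Icc_subset_Icc_right hin)
              intro q hq _
              obtain ⟨hq1, hq2⟩ := Finset.mem_Icc.mp hq
              exact hGnn q hq1 (le_trans hq2 hnN)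
      rcases eq_or_lt_of_le (norm_nonneg (u i)) with h0 | h0
      · have hn0 : ‖u n‖ ≤ 0 := by rw [h0]; exact hun_le
        have := norm_nonneg (u 0)
        linarith
      · have hsq : ‖u i‖ * ‖u i‖ ≤ (‖u 0‖ +
            2 * ∑ k ∈ Finset.Icc 1 n, ∑ j ∈ Finset.Icc 1 k, doc τ k (k - j) * ‖f j‖) * ‖u i‖ := by
          have h1 : ‖u 0‖^2 ≤ ‖u 0‖ * ‖u i‖ :=
            mul_le_mul_of_nonneg_left hu0_le (norm_nonneg _) |>.trans_eq' (by rw [sq])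
          nlinarith [hm, hsum_le]
        have := le_of_mul_le_mul_right hsq h0
        linarith
  refine ⟨hmain, ?_, ?_⟩
  · have hsup0 : 0 ≤ (Finset.Icc 1 n).sup' (Finset.nonempty_Icc.mpr hn) (fun j => ‖f j‖) :=
      le_trans (norm_nonneg (f 1))
        (Finset.le_sup' (fun j => ‖f j‖) (Finset.mem_Icc.mpr ⟨le_rfl, hn⟩))
    have h2 : ∑ k ∈ Finset.Icc 1 n, ∑ j ∈ Finset.Icc 1 k, doc τ k (k - j) * ‖f j‖
        ≤ tlv τ n * (Finset.Icc 1 n).sup' (Finset.nonempty_Icc.mpr hn) (fun j => ‖f j‖) := by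
      calc ∑ k ∈ Finset.Icc 1 n, ∑ j ∈ Finset.Icc 1 k, doc τ k (k - j) * ‖f j‖
          ≤ ∑ k ∈ Finset.Icc 1 n,
              τ k * (Finset.Icc 1 n).sup' (Finset.nonempty_Icc.mpr hn) (fun j => ‖f j‖) := by
            apply Finset.sum_le_sum
            intro k hk
            obtain ⟨hk1, hk2⟩ := Finset.mem_Icc.mp hk
            calc ∑ j ∈ Finset.Icc 1 k, doc τ k (k - j) * ‖f j‖
                ≤ ∑ j ∈ Finset.Icc 1 k, doc τ k (k - j) *
                    (Finset.Icc 1 n).sup' (Finset.nonempty_Icc.mpr hn) (fun j => ‖f j‖) := by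
                  apply Finset.sum_le_sum
                  intro j hj
                  obtain ⟨hj1, hj2⟩ := Finset.mem_Icc.mp hj
                  exact mul_le_mul_of_nonneg_left
                    (Finset.le_sup' (fun j => ‖f j‖) (Finset.mem_Icc.mpr ⟨hj1, by omega⟩))
                    (doc_pos hτ (by omega) (k-j) j (by omega) hj1).le
              _ = τ k * (Finset.Icc 1 n).sup' (Finset.nonempty_Icc.mpr hn) (fun j => ‖f j‖) := by
                  rw [← Finset.sum_mul, doc_row_sum hτ hk1 (by omega)]
        _ = tlv τ n * (Finset.Icc 1 n).sup' (Finset.nonempty_Icc.mpr hn) (fun j => ‖f j‖) := by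
            rw [tlv, Finset.sum_mul]
    have : 2 * tlv τ n * (Finset.Icc 1 n).sup' (Finset.nonempty_Icc.mpr hn) (fun j => ‖f j‖)
        = 2 * (tlv τ n * (Finset.Icc 1 n).sup' (Finset.nonempty_Icc.mpr hn) (fun j => ‖f j‖)) := by
      ring
    rw [this]
    linarith
  · intro hf
    have hzero : ∑ k ∈ Finset.Icc 1 n, ∑ j ∈ Finset.Icc 1 k, doc τ k (k - j) * ‖f j‖ = 0 := by
      apply Finset.sum_eq_zero
      intro k hk
      obtain ⟨hk1, hk2⟩ := Finset.mem_Icc.mp hk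
      apply Finset.sum_eq_zero
      intro j hj
      obtain ⟨hj1, hj2⟩ := Finset.mem_Icc.mp hj
      rw [hf j hj1 (by omega), norm_zero, mul_zero]
    rw [hzero] at hmain
    linarith
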